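/- Let ξ ∈ ℝ, f ∈ D, and −∞ < ω_min < ω_max < ∞. Then f belongs to the kinetic invariant domain D̃_ξ = {f ∈ D : f = 0 or ω_min ≤ ω₁(f,ξ) ≤ ω₂(f,ξ) ≤ ω_max} if and only if H_{S_ω}(f,ξ) ≤ 0, where S_ω(v) = (v - ω_max)_+² + (ω_min - v)_+². -/

import Mathlib

open MeasureTheory Real Set

noncomputable section

/-- J_λ = ∫_{-1}^1 (1-z²)^λ dz -/
def Jl (l : ℝ) : ℝ := ∫ z in (-1:ℝ)..1, (1 - z^2) ^ l

/-- θ = (γ-1)/2 -/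
def th (γ : ℝ) : ℝ := (γ - 1) / 2

/-- λ = 1/(γ-1) - 1/2 -/
def lam (γ : ℝ) : ℝ := 1 / (γ - 1) - 1 / 2

/-- a_γ = 2√(γκ)/(γ-1) -/
def ag (γ κ : ℝ) : ℝ := 2 * Real.sqrt (γ * κ) / (γ - 1)

/-- c_{γ,κ} = a_γ^{-2/(γ-1)} / J_λ -/
def cgk (γ κ : ℝ) : ℝ := ag γ κ ^ (-(2 / (γ - 1))) / Jl (lam γ)

/-- χ(ρ,ξ) = c_{γ,κ} (a_γ² ρ^{γ-1} - ξ²)_+^λ -/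
def chi (γ κ ρ ξ : ℝ) : ℝ :=
  cgk γ κ * (max (ag γ κ ^ 2 * ρ ^ (γ - 1) - ξ ^ 2) 0) ^ lam γ

/-- vector-valued Maxwellian -/
def Mx (γ κ ρ u ξ : ℝ) : ℝ × ℝ :=
  (chi γ κ ρ (ξ - u), ((1 - th γ) * u + th γ * ξ) * chi γ κ ρ (ξ - u))

/-- domain D = {f₀ > 0} ∪ {0} -/
def Dset : Set (ℝ × ℝ) := {f | 0 < f.1 ∨ f = 0}

/-- kinetic energy H(f,ξ) -/
def Hk (γ κ : ℝ) (f : ℝ × ℝ) (ξ : ℝ) : ℝ :=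
  if f = 0 then 0 else
    th γ / (1 - th γ) * (ξ ^ 2 / 2) * f.1
      + th γ / (2 * cgk γ κ ^ (1 / lam γ)) * (f.1 ^ (1 + 1 / lam γ) / (1 + 1 / lam γ))
      + 1 / (1 - th γ) * (1 / 2) * (f.2 ^ 2 / f.1)
      - th γ / (1 - th γ) * ξ * f.2

/-- u(f,ξ), inverse relation to f = M(ρ,u,ξ) -/
def uf (γ : ℝ) (f : ℝ × ℝ) (ξ : ℝ) : ℝ := (f.2 / f.1 - th γ * ξ) / (1 - th γ)

/-- ρ(f,ξ), inverse relation to f = M(ρ,u,ξ) -/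
def rf (γ κ : ℝ) (f : ℝ × ℝ) (ξ : ℝ) : ℝ :=
  ag γ κ ^ (-(2 / (γ - 1))) *
    (((f.2 / f.1 - ξ) / (1 - th γ)) ^ 2 + (f.1 / cgk γ κ) ^ (1 / lam γ)) ^ (1 / (γ - 1))

/-- kinetic Riemann invariant ω₁(f,ξ) -/
def om1 (γ κ : ℝ) (f : ℝ × ℝ) (ξ : ℝ) : ℝ :=
  uf γ f ξ - ag γ κ * rf γ κ f ξ ^ th γ

/-- kinetic Riemann invariant ω₂(f,ξ) -/
def om2 (γ κ : ℝ) (f : ℝ × ℝ) (ξ : ℝ) : ℝ :=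
  uf γ f ξ + ag γ κ * rf γ κ f ξ ^ th γ

/-- Υ_{l}(z) = ∫_1^z (y²-1)^l dy -/
def Ups (l z : ℝ) : ℝ := ∫ y in (1:ℝ)..z, (y ^ 2 - 1) ^ l

/-- entropy kernel Φ(ρ,u,ξ,v) -/
def Phi (γ κ ρ u ξ v : ℝ) : ℝ :=
  let w1 := u - ag γ κ * ρ ^ th γ
  let w2 := u + ag γ κ * ρ ^ th γ
  if w1 < ξ ∧ ξ < w2 ∧ w1 < v ∧ v < w2 then
    (1 - th γ) ^ 2 / th γ * (cgk γ κ / Jl (lam γ)) * |ξ - v| ^ (2 * lam γ - 1) *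
      Ups (lam γ - 1) (((ξ + v) * (w1 + w2) - 2 * (w1 * w2 + ξ * v)) / ((w2 - w1) * |ξ - v|))
  else 0

/-- kinetic entropy H_S(f,ξ) -/
def HS (γ κ : ℝ) (S : ℝ → ℝ) (f : ℝ × ℝ) (ξ : ℝ) : ℝ :=
  if f = 0 then 0 else ∫ v : ℝ, Phi γ κ (rf γ κ f ξ) (uf γ f ξ) ξ v * S v

/-- kinetic invariant domain D̃_ξ -/
def Dtil (γ κ ωmin ωmax ξ : ℝ) : Set (ℝ × ℝ) :=
  {f | f ∈ Dset ∧ (f = 0 ∨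
    (ωmin ≤ om1 γ κ f ξ ∧ om1 γ κ f ξ ≤ om2 γ κ f ξ ∧ om2 γ κ f ξ ≤ ωmax))}

/-- T_S(ρ,u) (subdifferential of η_S) -/
def TS (γ κ : ℝ) (S : ℝ → ℝ) (ρ u : ℝ) : ℝ × ℝ :=
  ((1 / Jl (lam γ)) * ∫ z in (-1:ℝ)..1, (1 - z ^ 2) ^ lam γ *
      (S (u + ag γ κ * ρ ^ th γ * z)
        + (th γ * ag γ κ * ρ ^ th γ * z - u) * deriv S (u + ag γ κ * ρ ^ th γ * z)),
   (1 / Jl (lam γ)) * ∫ z in (-1:ℝ)..1, (1 - z ^ 2) ^ lam γ *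
      deriv S (u + ag γ κ * ρ ^ th γ * z))

/-- inner product on ℝ² -/
def dot (a b : ℝ × ℝ) : ℝ := a.1 * b.1 + a.2 * b.2

/-! For `f.1 > 0` the point `ξ` lies strictly between `ω₁ = om1` and `ω₂ = om2`, because
`(ω₂ - ω₁)² / 4 = (u - ξ)² + (f₀ / c)^(1/λ)`. On `(ω₁, ω₂)` the kernel `Φ` is a positive
constant times `|ξ - v|^(2λ-1) Υ_{λ-1}(q / |ξ - v|)`, where `q = phiScale ω₁ ω₂ ξ v` is a
weighted mean of `ξ - ω₁` and `ω₂ - ξ` exceeding `|ξ - v|`. So `Φ > 0` off `v = ξ`, and the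
growth bound `Υ_{λ-1}(z) ≤ z^(2λ-1) + z^λ / λ` dominates `Φ` by `C₁ + C₂ |ξ - v|^(λ-1)`,
integrable since `λ > 0`. Integrability matters: the Bochner integral of a non-integrable
function is `0`. Hence `H_{S_ω}(f, ξ)` vanishes when the continuous `S_ω ≥ 0` vanishes on
`(ω₁, ω₂) ⊆ [ω_min, ω_max]`, and is positive otherwise, `S_ω` being positive on an open subset
of `(ω₁, ω₂)`. -/

section Parameters

variable {γ κ : ℝ}

lemma th_pos (hγ : 1 < γ) : 0 < th γ := by unfold th; linarith

lemma th_lt_one (hγ' : γ < 3) : th γ < 1 := by unfold th; linarith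

lemma lam_pos (hγ : 1 < γ) (hγ' : γ < 3) : 0 < lam γ := by
  have : (1 : ℝ) / 2 < 1 / (γ - 1) := one_div_lt_one_div_of_lt (by linarith) (by linarith)
  unfold lam
  linarith

lemma ag_pos (hκ : 0 < κ) (hγ : 1 < γ) : 0 < ag γ κ :=
  div_pos (mul_pos two_pos (Real.sqrt_pos.mpr (by positivity))) (by linarith)

lemma Jl_pos {l : ℝ} (hl : 0 ≤ l) : 0 < Jl l := by
  have hcont : Continuous fun z : ℝ => (1 - z ^ 2) ^ l :=
    (by fun_prop : Continuous fun z : ℝ => 1 - z ^ 2).rpow_const fun _ => Or.inr hl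
  exact intervalIntegral.intervalIntegral_pos_of_pos_on (hcont.intervalIntegrable _ _)
    (fun _ hz => Real.rpow_pos_of_pos (by nlinarith [hz.1, hz.2]) _) (by norm_num)

lemma cgk_pos (hκ : 0 < κ) (hγ : 1 < γ) (hγ' : γ < 3) : 0 < cgk γ κ :=
  div_pos (Real.rpow_pos_of_pos (ag_pos hκ hγ) _) (Jl_pos (lam_pos hγ hγ').le)

end Parameters

lemma intervalIntegrable_abs_rpow {r : ℝ} (hr : -1 < r) (a b : ℝ) :
    IntervalIntegrable (fun x : ℝ => |x| ^ r) volume a b := by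
  have nonneg : ∀ c, 0 ≤ c → IntervalIntegrable (fun x : ℝ => |x| ^ r) volume 0 c := fun c hc =>
    (intervalIntegral.intervalIntegrable_rpow' hr).congr fun x hx => by
      rw [uIoc_of_le hc] at hx
      simp [abs_of_pos hx.1]
  have from_zero : ∀ c, IntervalIntegrable (fun x : ℝ => |x| ^ r) volume 0 c := fun c => by
    rcases le_total 0 c with hc | hc
    · exact nonneg c hc
    · simpa using (IntervalIntegrable.iff_comp_neg (by simp)).mp (nonneg (-c) (by linarith))
  exact (from_zero a).symm.trans (from_zero b)

lemma intervalIntegrable_abs_sub_rpow {r : ℝ} (hr : -1 < r) (ξ a b : ℝ) :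
    IntervalIntegrable (fun v : ℝ => |ξ - v| ^ r) volume a b := by
  simpa using (intervalIntegrable_abs_rpow hr (ξ - a) (ξ - b)).comp_sub_left ξ

section Ups

variable {l z : ℝ}

lemma intervalIntegrable_sq_sub_one_rpow (hl : -1 < l) (hz : 1 ≤ z) :
    IntervalIntegrable (fun y : ℝ => (y ^ 2 - 1) ^ l) volume 1 z := by
  have hsub : IntervalIntegrable (fun y : ℝ => (y - 1) ^ l) volume 1 z := by
    simpa using
      (intervalIntegral.intervalIntegrable_rpow' hl (a := 0) (b := z - 1)).comp_sub_right 1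
  have hadd : ContinuousOn (fun y : ℝ => (y + 1) ^ l) (uIcc 1 z) := by
    refine ContinuousOn.rpow_const (by fun_prop) fun y hy => Or.inl ?_
    rw [uIcc_of_le hz] at hy
    linarith [hy.1]
  refine (hsub.mul_continuousOn hadd).congr fun y hy => ?_
  rw [uIoc_of_le hz] at hy
  rw [← Real.mul_rpow (by linarith [hy.1]) (by linarith [hy.1])]
  ring_nf

lemma Ups_nonneg (hz : 1 ≤ z) : 0 ≤ Ups l z :=
  intervalIntegral.integral_nonneg hz fun _ hy => Real.rpow_nonneg (by nlinarith [hy.1]) l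

lemma Ups_pos (hl : -1 < l) (hz : 1 < z) : 0 < Ups l z :=
  intervalIntegral.intervalIntegral_pos_of_pos_on (intervalIntegrable_sq_sub_one_rpow hl hz.le)
    (fun _ hy => Real.rpow_pos_of_pos (by nlinarith [hy.1]) l) hz

lemma continuousAt_Ups (hl : -1 < l) (hz : 1 < z) : ContinuousAt (Ups l) z := by
  have hz' : (1 : ℝ) ≤ z + 1 := by linarith
  refine (intervalIntegral.continuousOn_primitive_interval'
    (intervalIntegrable_sq_sub_one_rpow hl hz') left_mem_uIcc).continuousAt ?_
  rw [uIcc_of_le hz']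
  exact Icc_mem_nhds hz (by linarith)

lemma Ups_sub_one_le_of_one_le (hl : 1 ≤ l) (hz : 1 ≤ z) :
    Ups (l - 1) z ≤ z ^ (2 * l - 1) := by
  have hz0 : 0 < z := by linarith
  have hle : ∀ y ∈ Icc 1 z, (y ^ 2 - 1) ^ (l - 1) ≤ z ^ (2 * l - 2) := fun y hy => by
    rw [show 2 * l - 2 = 2 * (l - 1) by ring, Real.rpow_mul hz0.le, Real.rpow_two]
    exact Real.rpow_le_rpow (by nlinarith [hy.1]) (by nlinarith [hy.1, hy.2]) (by linarith)
  calc Ups (l - 1) z ≤ ∫ _ in (1 : ℝ)..z, z ^ (2 * l - 2) :=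
        intervalIntegral.integral_mono_on hz (intervalIntegrable_sq_sub_one_rpow (by linarith) hz)
          intervalIntegrable_const hle
    _ = (z - 1) * z ^ (2 * l - 2) := by simp
    _ ≤ z * z ^ (2 * l - 2) := by gcongr; linarith
    _ = z ^ (2 * l - 1) := by
        rw [← Real.rpow_one_add' hz0.le (by linarith)]
        ring_nf

lemma Ups_sub_one_le_of_le_one (hl0 : 0 < l) (hl : l ≤ 1) (hz : 1 ≤ z) :
    Ups (l - 1) z ≤ z ^ l / l := by
  have hl' : (-1 : ℝ) < l - 1 := by linarith
  have hle : ∀ y ∈ Icc 1 z, (y ^ 2 - 1) ^ (l - 1) ≤ (y - 1) ^ (l - 1) := fun y hy => by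
    rw [show y ^ 2 - 1 = (y - 1) * (y + 1) by ring,
      Real.mul_rpow (by linarith [hy.1]) (by linarith [hy.1])]
    exact mul_le_of_le_one_right (Real.rpow_nonneg (by linarith [hy.1]) _)
      (Real.rpow_le_one_of_one_le_of_nonpos (by linarith [hy.1]) (by linarith))
  have hint : IntervalIntegrable (fun y : ℝ => (y - 1) ^ (l - 1)) volume 1 z := by
    simpa using
      (intervalIntegral.intervalIntegrable_rpow' hl' (a := 0) (b := z - 1)).comp_sub_right 1
  calc Ups (l - 1) z ≤ ∫ y in (1 : ℝ)..z, (y - 1) ^ (l - 1) :=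
        intervalIntegral.integral_mono_on hz (intervalIntegrable_sq_sub_one_rpow hl' hz) hint hle
    _ = (z - 1) ^ l / l := by
        rw [intervalIntegral.integral_comp_sub_right (fun x : ℝ => x ^ (l - 1)),
          integral_rpow (Or.inl hl')]
        simp [Real.zero_rpow hl0.ne']
    _ ≤ z ^ l / l := by gcongr; linarith

lemma Ups_sub_one_le (hl : 0 < l) (hz : 1 ≤ z) :
    Ups (l - 1) z ≤ z ^ (2 * l - 1) + z ^ l / l := by
  have hz0 : 0 ≤ z := by linarith
  rcases le_total 1 l with h | h
  · exact le_add_of_le_of_nonneg (Ups_sub_one_le_of_one_le h hz)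
      (div_nonneg (Real.rpow_nonneg hz0 l) hl.le)
  · exact le_add_of_nonneg_of_le (Real.rpow_nonneg hz0 _) (Ups_sub_one_le_of_le_one hl h hz)

lemma rpow_mul_Ups_sub_one_div_le (hl : 0 < l) {d q : ℝ} (hd : 0 < d) (hdq : d ≤ q) :
    d ^ (2 * l - 1) * Ups (l - 1) (q / d) ≤ q ^ (2 * l - 1) + q ^ l / l * d ^ (l - 1) := by
  have hq : 0 ≤ q := hd.le.trans hdq
  have hd' : d ^ (2 * l - 1) / d ^ l = d ^ (l - 1) := by
    rw [← Real.rpow_sub hd]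
    ring_nf
  calc d ^ (2 * l - 1) * Ups (l - 1) (q / d)
      ≤ d ^ (2 * l - 1) * ((q / d) ^ (2 * l - 1) + (q / d) ^ l / l) :=
        mul_le_mul_of_nonneg_left (Ups_sub_one_le hl ((one_le_div hd).mpr hdq))
          (Real.rpow_nonneg hd.le _)
    _ = q ^ (2 * l - 1) + q ^ l / l * (d ^ (2 * l - 1) / d ^ l) := by
        rw [Real.div_rpow hq hd.le, Real.div_rpow hq hd.le]
        have : d ^ (2 * l - 1) ≠ 0 := (Real.rpow_pos_of_pos hd _).ne'
        field_simp
    _ = q ^ (2 * l - 1) + q ^ l / l * d ^ (l - 1) := by rw [hd']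

end Ups

section Kernel

variable {l w₁ w₂ ξ v : ℝ}

def phiScale (w₁ w₂ ξ v : ℝ) : ℝ := ((ξ + v) * (w₁ + w₂) - 2 * (w₁ * w₂ + ξ * v)) / (w₂ - w₁)

def phiKernel (l w₁ w₂ ξ v : ℝ) : ℝ :=
  |ξ - v| ^ (2 * l - 1) * Ups (l - 1) (phiScale w₁ w₂ ξ v / |ξ - v|)

lemma phiScale_eq :
    phiScale w₁ w₂ ξ v = ((ξ - w₁) * (w₂ - v) + (w₂ - ξ) * (v - w₁)) / (w₂ - w₁) := by
  unfold phiScale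
  ring_nf

section Interior

variable (hξ : ξ ∈ Ioo w₁ w₂) (hv : v ∈ Ioo w₁ w₂)
include hξ hv

lemma min_le_phiScale : min (ξ - w₁) (w₂ - ξ) ≤ phiScale w₁ w₂ ξ v := by
  obtain ⟨h₁, h₂⟩ := hξ
  obtain ⟨hv₁, hv₂⟩ := hv
  rw [phiScale_eq, le_div_iff₀ (by linarith)]
  nlinarith [min_le_left (ξ - w₁) (w₂ - ξ), min_le_right (ξ - w₁) (w₂ - ξ)]

lemma phiScale_le : phiScale w₁ w₂ ξ v ≤ w₂ - w₁ := by
  obtain ⟨h₁, h₂⟩ := hξ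
  obtain ⟨hv₁, hv₂⟩ := hv
  rw [phiScale_eq, div_le_iff₀ (by linarith)]
  nlinarith

lemma abs_sub_lt_phiScale : |ξ - v| < phiScale w₁ w₂ ξ v := by
  obtain ⟨h₁, h₂⟩ := hξ
  obtain ⟨hv₁, hv₂⟩ := hv
  rw [phiScale_eq, lt_div_iff₀ (by linarith)]
  rcases abs_cases (ξ - v) with ⟨habs, _⟩ | ⟨habs, _⟩ <;> rw [habs] <;> nlinarith

lemma phiKernel_pos (hl : 0 < l) (hvξ : v ≠ ξ) : 0 < phiKernel l w₁ w₂ ξ v := by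
  have hd : 0 < |ξ - v| := abs_pos.mpr (sub_ne_zero.mpr hvξ.symm)
  exact mul_pos (Real.rpow_pos_of_pos hd _) (Ups_pos (by linarith)
    ((one_lt_div hd).mpr (abs_sub_lt_phiScale hξ hv)))

lemma phiKernel_le (hl : 0 < l) (hvξ : v ≠ ξ) :
    phiKernel l w₁ w₂ ξ v ≤ max (min (ξ - w₁) (w₂ - ξ) ^ (2 * l - 1)) ((w₂ - w₁) ^ (2 * l - 1))
      + (w₂ - w₁) ^ l / l * |ξ - v| ^ (l - 1) := by
  have hd : 0 < |ξ - v| := abs_pos.mpr (sub_ne_zero.mpr hvξ.symm)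
  have hm : 0 < min (ξ - w₁) (w₂ - ξ) := lt_min (by linarith [hξ.1]) (by linarith [hξ.2])
  have hlow := min_le_phiScale hξ hv
  have hup := phiScale_le hξ hv
  have hq : 0 < phiScale w₁ w₂ ξ v := hm.trans_le hlow
  refine (rpow_mul_Ups_sub_one_div_le hl hd (abs_sub_lt_phiScale hξ hv).le).trans
    (add_le_add ?_ ?_)
  · rcases le_total 0 (2 * l - 1) with h | h
    · exact (Real.rpow_le_rpow hq.le hup h).trans (le_max_right _ _)
    · exact (Real.rpow_le_rpow_of_nonpos hm hlow h).trans (le_max_left _ _)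
  · gcongr

end Interior

lemma continuousOn_phiKernel (hl : 0 < l) (hξ : ξ ∈ Ioo w₁ w₂) :
    ContinuousOn (phiKernel l w₁ w₂ ξ) (Ioo w₁ w₂ \ {ξ}) := fun v hv => by
  have hd : 0 < |ξ - v| := abs_pos.mpr (sub_ne_zero.mpr (Ne.symm hv.2))
  have hdist : ContinuousAt (fun v => |ξ - v|) v := by fun_prop
  have hscale : ContinuousAt (fun v => phiScale w₁ w₂ ξ v / |ξ - v|) v :=
    ((by unfold phiScale; fun_prop : Continuous (phiScale w₁ w₂ ξ)).continuousAt).div hdist hd.ne'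
  have hUps : ContinuousAt (Ups (l - 1)) (phiScale w₁ w₂ ξ v / |ξ - v|) :=
    continuousAt_Ups (by linarith) ((one_lt_div hd).mpr (abs_sub_lt_phiScale hξ hv.1))
  exact ((hdist.rpow_const (Or.inl hd.ne')).mul
    (hUps.comp (f := fun v => phiScale w₁ w₂ ξ v / |ξ - v|) hscale)).continuousWithinAt

lemma integrableOn_phiKernel (hl : 0 < l) (hξ : ξ ∈ Ioo w₁ w₂) :
    IntegrableOn (phiKernel l w₁ w₂ ξ) (Ioo w₁ w₂ \ {ξ}) := by
  have hU : MeasurableSet (Ioo w₁ w₂ \ {ξ}) := measurableSet_Ioo.diff (measurableSet_singleton ξ)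
  have hbound : IntegrableOn (fun v => max (min (ξ - w₁) (w₂ - ξ) ^ (2 * l - 1))
      ((w₂ - w₁) ^ (2 * l - 1)) + (w₂ - w₁) ^ l / l * |ξ - v| ^ (l - 1)) (Ioo w₁ w₂ \ {ξ}) :=
    ((intervalIntegrable_iff_integrableOn_Ioo_of_le (hξ.1.trans hξ.2).le).mp
      (intervalIntegrable_const.add
        ((intervalIntegrable_abs_sub_rpow (by linarith) ξ w₁ w₂).const_mul _))).mono_set
      sdiff_subset
  refine Integrable.mono' hbound ((continuousOn_phiKernel hl hξ).aestronglyMeasurable hU)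
    (ae_restrict_of_forall_mem hU fun v hv => ?_)
  rw [Real.norm_eq_abs, abs_of_pos (phiKernel_pos hξ hv.1 hl hv.2)]
  exact phiKernel_le hξ hv.1 hl hv.2

lemma setIntegral_phiKernel_mul_pos (hl : 0 < l) (hξ : ξ ∈ Ioo w₁ w₂) {S : ℝ → ℝ}
    (hS : Continuous S) (hS0 : ∀ v, 0 ≤ S v) (hSpos : ∃ v ∈ Ioo w₁ w₂, 0 < S v) :
    0 < ∫ v in Ioo w₁ w₂ \ {ξ}, phiKernel l w₁ w₂ ξ v * S v := by
  have hU : MeasurableSet (Ioo w₁ w₂ \ {ξ}) := measurableSet_Ioo.diff (measurableSet_singleton ξ)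
  have hint : IntegrableOn (fun v => phiKernel l w₁ w₂ ξ v * S v) (Ioo w₁ w₂ \ {ξ}) :=
    (integrableOn_phiKernel hl hξ).mul_continuousOn_of_subset hS.continuousOn hU isCompact_Icc
      (sdiff_subset.trans Ioo_subset_Icc_self)
  rw [setIntegral_pos_iff_support_of_nonneg_ae (ae_restrict_of_forall_mem hU fun v hv =>
    mul_nonneg (phiKernel_pos hξ hv.1 hl hv.2).le (hS0 v)) hint]
  obtain ⟨v₀, hv₀, hSv₀⟩ := hSpos
  set V := Ioo w₁ w₂ ∩ {v | 0 < S v}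
  calc 0 < volume V := (isOpen_Ioo.inter (isOpen_lt continuous_const hS)).measure_pos volume
        ⟨v₀, hv₀, hSv₀⟩
    _ = volume (V \ {ξ}) := (measure_sdiff_null (measure_singleton ξ)).symm
    _ ≤ _ := measure_mono fun v hv => by
        exact ⟨(mul_pos (phiKernel_pos hξ hv.1.1 hl hv.2) hv.1.2).ne', hv.1.1, hv.2⟩

end Kernel

section Invariants

variable {γ κ ξ : ℝ} {f : ℝ × ℝ}

lemma mul_rpow_half_sq {a X p : ℝ} (ha : 0 < a) (hX : 0 ≤ X) (hp : 0 < p) :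
    (a * (a ^ (-(2 / p)) * X ^ (1 / p)) ^ (p / 2)) ^ 2 = X := by
  have hY : 0 ≤ a ^ (-(2 / p)) * X ^ (1 / p) :=
    mul_nonneg (Real.rpow_nonneg ha.le _) (Real.rpow_nonneg hX _)
  have hexp : p / 2 * ((2 : ℕ) : ℝ) = p := by push_cast; ring
  rw [mul_pow, ← Real.rpow_mul_natCast hY, hexp, Real.mul_rpow (Real.rpow_nonneg ha.le _)
    (Real.rpow_nonneg hX _), ← Real.rpow_mul ha.le, ← Real.rpow_mul hX,
    show -(2 / p) * p = -2 by field_simp, show 1 / p * p = 1 by field_simp, Real.rpow_one,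
    Real.rpow_neg ha.le, Real.rpow_two]
  field_simp

lemma uf_sub_self (hγ' : γ < 3) : uf γ f ξ - ξ = (f.2 / f.1 - ξ) / (1 - th γ) := by
  have : 1 - th γ ≠ 0 := (sub_pos.mpr (th_lt_one hγ')).ne'
  unfold uf
  field_simp
  ring

lemma mem_Ioo_om1_om2 (hκ : 0 < κ) (hγ : 1 < γ) (hγ' : γ < 3) (hf : 0 < f.1) :
    ξ ∈ Ioo (om1 γ κ f ξ) (om2 γ κ f ξ) := by
  have hE : 0 < (f.1 / cgk γ κ) ^ (1 / lam γ) :=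
    Real.rpow_pos_of_pos (div_pos hf (cgk_pos hκ hγ hγ')) _
  have hX : 0 ≤ ((f.2 / f.1 - ξ) / (1 - th γ)) ^ 2 + (f.1 / cgk γ κ) ^ (1 / lam γ) :=
    add_nonneg (sq_nonneg _) hE.le
  have hag := ag_pos hκ hγ
  have hsq : (ag γ κ * rf γ κ f ξ ^ th γ) ^ 2 =
      ((f.2 / f.1 - ξ) / (1 - th γ)) ^ 2 + (f.1 / cgk γ κ) ^ (1 / lam γ) :=
    mul_rpow_half_sq hag hX (by linarith)
  have hrf : 0 ≤ rf γ κ f ξ := mul_nonneg (Real.rpow_nonneg hag.le _) (Real.rpow_nonneg hX _)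
  have := abs_lt_of_sq_lt_sq' (a := ξ - uf γ f ξ)
    (by rw [hsq, ← neg_sub, neg_sq, uf_sub_self hγ']; linarith)
    (mul_nonneg hag.le (Real.rpow_nonneg hrf _))
  exact ⟨by unfold om1; linarith, by unfold om2; linarith⟩

lemma mem_Dtil_iff {ωmin ωmax : ℝ} (hκ : 0 < κ) (hγ : 1 < γ) (hγ' : γ < 3) (hf : 0 < f.1) :
    f ∈ Dtil γ κ ωmin ωmax ξ ↔ ωmin ≤ om1 γ κ f ξ ∧ om2 γ κ f ξ ≤ ωmax := by
  have hf0 : f ≠ 0 := fun h => by simp [h] at hf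
  obtain ⟨hξ₁, hξ₂⟩ := mem_Ioo_om1_om2 (ξ := ξ) hκ hγ hγ' hf
  simp only [Dtil, Dset, mem_ofPred_eq, hf, hf0, true_or, false_or, true_and,
    (hξ₁.trans hξ₂).le]

end Invariants

lemma Phi_eq_indicator {γ κ ρ u ξ : ℝ}
    (hξ : ξ ∈ Ioo (u - ag γ κ * ρ ^ th γ) (u + ag γ κ * ρ ^ th γ)) :
    Phi γ κ ρ u ξ = (Ioo (u - ag γ κ * ρ ^ th γ) (u + ag γ κ * ρ ^ th γ)).indicator fun v =>
      (1 - th γ) ^ 2 / th γ * (cgk γ κ / Jl (lam γ)) *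
        phiKernel (lam γ) (u - ag γ κ * ρ ^ th γ) (u + ag γ κ * ρ ^ th γ) ξ v := by
  funext v
  by_cases hv : v ∈ Ioo (u - ag γ κ * ρ ^ th γ) (u + ag γ κ * ρ ^ th γ)
  · rw [indicator_of_mem hv, Phi, if_pos ⟨hξ.1, hξ.2, hv.1, hv.2⟩, phiKernel, phiScale, div_div,
      mul_assoc]
  · rw [indicator_of_notMem hv, Phi, if_neg fun h => hv ⟨h.2.2.1, h.2.2.2⟩]

lemma HS_eq_mul_setIntegral {γ κ ξ : ℝ} {f : ℝ × ℝ} (hκ : 0 < κ) (hγ : 1 < γ) (hγ' : γ < 3)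
    (S : ℝ → ℝ) (hf : 0 < f.1) :
    HS γ κ S f ξ = (1 - th γ) ^ 2 / th γ * (cgk γ κ / Jl (lam γ)) *
      ∫ v in Ioo (om1 γ κ f ξ) (om2 γ κ f ξ) \ {ξ},
        phiKernel (lam γ) (om1 γ κ f ξ) (om2 γ κ f ξ) ξ v * S v := by
  have hf0 : f ≠ 0 := fun h => by simp [h] at hf
  rw [HS, if_neg hf0, Phi_eq_indicator (mem_Ioo_om1_om2 hκ hγ hγ' hf),
    setIntegral_congr_set (sdiff_null_ae_eq_self (measure_singleton ξ)), ← integral_const_mul,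
    ← integral_indicator measurableSet_Ioo]
  simp only [← indicator_mul_left, mul_assoc]
  rfl

def Somega (ωmin ωmax v : ℝ) : ℝ := (max (v - ωmax) 0) ^ 2 + (max (ωmin - v) 0) ^ 2

lemma Somega_nonneg (ωmin ωmax v : ℝ) : 0 ≤ Somega ωmin ωmax v := by
  unfold Somega
  positivity

section Somega

variable {ωmin ωmax v : ℝ}

lemma continuous_Somega : Continuous (Somega ωmin ωmax) := by
  unfold Somega
  fun_prop

lemma Somega_eq_zero (hmin : ωmin ≤ v) (hmax : v ≤ ωmax) : Somega ωmin ωmax v = 0 := by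
  simp [Somega, hmin, hmax]

lemma Somega_pos (h : v < ωmin ∨ ωmax < v) : 0 < Somega ωmin ωmax v := by
  unfold Somega
  rcases h with h | h
  · exact add_pos_of_nonneg_of_pos (sq_nonneg _) (pow_pos (lt_max_of_lt_left (by linarith)) 2)
  · exact add_pos_of_pos_of_nonneg (pow_pos (lt_max_of_lt_left (by linarith)) 2) (sq_nonneg _)

lemma exists_mem_Ioo_Somega_pos {w₁ w₂ : ℝ} (hw : w₁ < w₂) (h : w₁ < ωmin ∨ ωmax < w₂) :
    ∃ v ∈ Ioo w₁ w₂, 0 < Somega ωmin ωmax v := by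
  rcases h with h | h
  · obtain ⟨v, hv₁, hv₂⟩ := exists_between (lt_min hw h)
    exact ⟨v, ⟨hv₁, hv₂.trans_le (min_le_left _ _)⟩,
      Somega_pos (Or.inl (hv₂.trans_le (min_le_right _ _)))⟩
  · obtain ⟨v, hv₁, hv₂⟩ := exists_between (max_lt hw h)
    exact ⟨v, ⟨(le_max_left _ _).trans_lt hv₁, hv₂⟩,
      Somega_pos (Or.inr ((le_max_right _ _).trans_lt hv₁))⟩

end Somega

theorem stmt9_general (γ κ : ℝ) (hκ : 0 < κ) (hγ : 1 < γ) (hγ' : γ < 3)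
    (ξ ωmin ωmax : ℝ) (f : ℝ × ℝ) (hf : f ∈ Dset) :
    f ∈ Dtil γ κ ωmin ωmax ξ ↔
      HS γ κ (fun v => (max (v - ωmax) 0) ^ 2 + (max (ωmin - v) 0) ^ 2) f ξ ≤ 0 := by
  rcases eq_or_ne f 0 with rfl | hf0
  · simp [Dtil, Dset, HS]
  have hf₁ : 0 < f.1 := hf.resolve_right hf0
  obtain ⟨hξ₁, hξ₂⟩ := mem_Ioo_om1_om2 (ξ := ξ) hκ hγ hγ' hf₁
  have hC : 0 < (1 - th γ) ^ 2 / th γ * (cgk γ κ / Jl (lam γ)) :=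
    mul_pos (div_pos (pow_pos (sub_pos.mpr (th_lt_one hγ')) 2) (th_pos hγ))
      (div_pos (cgk_pos hκ hγ hγ') (Jl_pos (lam_pos hγ hγ').le))
  change _ ↔ HS γ κ (Somega ωmin ωmax) f ξ ≤ 0
  rw [mem_Dtil_iff hκ hγ hγ' hf₁, HS_eq_mul_setIntegral hκ hγ hγ' _ hf₁]
  constructor
  · rintro ⟨hmin, hmax⟩
    rw [setIntegral_eq_zero_of_forall_eq_zero fun v hv => by
      rw [Somega_eq_zero (hmin.trans hv.1.1.le) (hv.1.2.le.trans hmax), mul_zero], mul_zero]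
  · intro hHS
    by_contra hout
    rw [not_and_or, not_le, not_le] at hout
    have hpos := setIntegral_phiKernel_mul_pos (lam_pos hγ hγ') ⟨hξ₁, hξ₂⟩ continuous_Somega
      (Somega_nonneg ωmin ωmax) (exists_mem_Ioo_Somega_pos (hξ₁.trans hξ₂) hout)
    exact (mul_pos hC hpos).not_ge hHS

theorem stmt9 (γ κ : ℝ) (hκ : 0 < κ) (hγ : 1 < γ) (hγ' : γ < 3)
    (ξ ωmin ωmax : ℝ) (hω : ωmin < ωmax) (f : ℝ × ℝ) (hf : f ∈ Dset) :
    f ∈ Dtil γ κ ωmin ωmax ξ ↔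
      HS γ κ (fun v => (max (v - ωmax) 0) ^ 2 + (max (ωmin - v) 0) ^ 2) f ξ ≤ 0 :=
  stmt9_general γ κ hκ hγ hγ' ξ ωmin ωmax f hf
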